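/- arXiv:1707.07329 — 2 statements merged into one kernel-verified Lean document; each statement's English description precedes it below -/
import Mathlib

section
/- Let w > 0, m ∈ ℝ, a < b, Λ(x) = exp(w(xm − x²/2)), Z = ∫_a^b Λ(x) dx, and μ = m + (Λ(a) − Λ(b))/(Zw). Then (1/Z)∫_a^b (x − μ)² Λ(x) dx = 1/w + [Λ(a)(a − m) − Λ(b)(b − m)]/(Zw) − [(Λ(a) − Λ(b))/(Zw)]². -/
/-!
The weight `Λ` solves `Λ' = w (m - x) Λ`, so `(x - m) Λ` has the primitive `-Λ / w`, and
integrating `(x - m) · (x - m) Λ` by parts expresses the second moment about `m` through the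
boundary values of `Λ` and `Z / w`. Expanding `(x - μ)² = (x - m)² - 2 (μ - m)(x - m) + (μ - m)²`,
the choice of `μ` makes the normalised variance equal to `M₂ / Z - (M₁ / Z)²`, where `Mₖ` are
the moments about `m`.
-/

open Real intervalIntegral

theorem hasDerivAt_exp_mul_quadratic (w m x : ℝ) :
    HasDerivAt (fun x => exp (w * (x * m - x ^ 2 / 2)))
      (w * (m - x) * exp (w * (x * m - x ^ 2 / 2))) x := by
  have hquad : HasDerivAt (fun x : ℝ => w * (x * m - x ^ 2 / 2)) (w * (m - x)) x := by
    refine ((((hasDerivAt_id x).mul_const m).sub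
      ((hasDerivAt_pow 2 x).div_const 2)).const_mul w).congr_deriv ?_
    simp only [Nat.cast_ofNat]
    ring
  simpa only [mul_comm] using hquad.exp

section GaussianWeight

variable {Λ : ℝ → ℝ} {w m : ℝ}

theorem hasDerivAt_neg_div_of_hasDerivAt (hw : w ≠ 0)
    (hΛ : ∀ x, HasDerivAt Λ (w * (m - x) * Λ x) x) (x : ℝ) :
    HasDerivAt (fun x => -Λ x / w) ((x - m) * Λ x) x := by
  refine ((hΛ x).neg.div_const w).congr_deriv ?_
  field_simp
  ring

theorem integral_sub_mul_of_hasDerivAt (hw : w ≠ 0)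
    (hΛ : ∀ x, HasDerivAt Λ (w * (m - x) * Λ x) x) (a b : ℝ) :
    ∫ x in a..b, (x - m) * Λ x = (Λ a - Λ b) / w := by
  have hcont : Continuous Λ := Differentiable.continuous fun x => (hΛ x).differentiableAt
  rw [integral_eq_sub_of_hasDerivAt (fun x _ => hasDerivAt_neg_div_of_hasDerivAt hw hΛ x)
    (((continuous_id.sub continuous_const).mul hcont).intervalIntegrable a b)]
  ring

theorem integral_sub_sq_mul_of_hasDerivAt (hw : w ≠ 0)
    (hΛ : ∀ x, HasDerivAt Λ (w * (m - x) * Λ x) x) (a b : ℝ) :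
    ∫ x in a..b, (x - m) ^ 2 * Λ x =
      (Λ a * (a - m) - Λ b * (b - m)) / w + (∫ x in a..b, Λ x) / w := by
  have hcont : Continuous Λ := Differentiable.continuous fun x => (hΛ x).differentiableAt
  have hparts := integral_mul_deriv_eq_deriv_mul (u := fun x => x - m)
    (fun x _ => (hasDerivAt_id' x).sub_const m)
    (fun x _ => hasDerivAt_neg_div_of_hasDerivAt hw hΛ x) intervalIntegrable_const
    (((continuous_id.sub continuous_const).mul hcont).intervalIntegrable a b)
  simp only [← mul_assoc, ← sq, one_mul, neg_div, integral_neg, integral_div] at hparts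
  rw [hparts]
  ring

end GaussianWeight

theorem integral_sub_sq_mul_eq_of_continuous {Λ : ℝ → ℝ} (hΛ : Continuous Λ) (a b m μ : ℝ) :
    ∫ x in a..b, (x - μ) ^ 2 * Λ x =
      (∫ x in a..b, (x - m) ^ 2 * Λ x) - 2 * (μ - m) * (∫ x in a..b, (x - m) * Λ x) +
        (μ - m) ^ 2 * ∫ x in a..b, Λ x := by
  have hexpand : ∀ x, (x - μ) ^ 2 * Λ x =
      ((x - m) ^ 2 * Λ x - 2 * (μ - m) * ((x - m) * Λ x)) + (μ - m) ^ 2 * Λ x := fun x => by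
    ring
  have h2 : Continuous fun x => (x - m) ^ 2 * Λ x := by fun_prop
  have h1 : Continuous fun x => (x - m) * Λ x := by fun_prop
  simp_rw [hexpand]
  rw [integral_add (f := fun x => (x - m) ^ 2 * Λ x - 2 * (μ - m) * ((x - m) * Λ x))
      (g := fun x => (μ - m) ^ 2 * Λ x) ((h2.sub (continuous_const.mul h1)).intervalIntegrable a b)
      ((continuous_const.mul hΛ).intervalIntegrable a b),
    integral_sub (f := fun x => (x - m) ^ 2 * Λ x) (g := fun x => 2 * (μ - m) * ((x - m) * Λ x))
      (h2.intervalIntegrable a b) ((continuous_const.mul h1).intervalIntegrable a b),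
    integral_const_mul, integral_const_mul]

theorem uniform_prior_posterior_variance (w m a b : ℝ) (hw : 0 < w) (hab : a < b)
    (Λ : ℝ → ℝ) (hΛ : ∀ x, Λ x = Real.exp (w * (x * m - x ^ 2 / 2)))
    (Z μ : ℝ) (hZ : Z = ∫ x in a..b, Λ x)
    (hμ : μ = m + (Λ a - Λ b) / (Z * w)) :
    (1 / Z) * ∫ x in a..b, (x - μ) ^ 2 * Λ x =
      1 / w + (Λ a * (a - m) - Λ b * (b - m)) / (Z * w) -
        ((Λ a - Λ b) / (Z * w)) ^ 2 := by
  obtain rfl : Λ = fun x => exp (w * (x * m - x ^ 2 / 2)) := funext hΛ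
  have hderiv := hasDerivAt_exp_mul_quadratic w m
  have hcont : Continuous fun x => exp (w * (x * m - x ^ 2 / 2)) := by fun_prop
  have hZpos : 0 < Z := hZ ▸ intervalIntegral_pos_of_pos (hcont.intervalIntegrable a b)
    (fun x => exp_pos _) hab
  rw [integral_sub_sq_mul_eq_of_continuous hcont a b m μ,
    integral_sub_sq_mul_of_hasDerivAt hw.ne' hderiv, integral_sub_mul_of_hasDerivAt hw.ne' hderiv,
    ← hZ, hμ]
  field_simp
  ring
end

section
/- Fix a < b and m ∈ ℝ with a ≤ m ≤ b not both endpoints equal to m. Let Λ_w(x) = exp(w(xm − x²/2)) and Z_w = ∫_a^b Λ_w(x) dx. Then (Λ_w(a) − Λ_w(b))/(Z_w · w) → 0 as w → ∞. -/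
open Filter

theorem bayes_to_ml_as_w_to_infty (a b m : ℝ) (hab : a < b) (hm : m ∈ Set.Ioo a b) :
    Filter.Tendsto
      (fun w : ℝ =>
        (Real.exp (w * (a * m - a ^ 2 / 2)) - Real.exp (w * (b * m - b ^ 2 / 2))) /
          ((∫ x in a..b, Real.exp (w * (x * m - x ^ 2 / 2))) * w))
      Filter.atTop (nhds 0) := by
  obtain ⟨ham, hmb⟩ := hm
  set c : ℝ := max (a * m - a ^ 2 / 2) (b * m - b ^ 2 / 2) with hc
  have hca : a * m - a ^ 2 / 2 ≤ c := le_max_left _ _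
  have hcb : b * m - b ^ 2 / 2 ≤ c := le_max_right _ _
  have hcM : c < m * m - m ^ 2 / 2 := by
    have h1 : 0 < (a - m) ^ 2 := by nlinarith
    have h2 : 0 < (b - m) ^ 2 := by nlinarith
    rcases max_cases (a * m - a ^ 2 / 2) (b * m - b ^ 2 / 2) with ⟨h, _⟩ | ⟨h, _⟩ <;>
      rw [hc, h] <;> nlinarith
  set d : ℝ := (m * m - m ^ 2 / 2 - c) / 2 with hd
  have hd0 : 0 < d := by rw [hd]; linarith
  set ε : ℝ := min (Real.sqrt (2 * d)) (min (m - a) (b - m)) with hε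
  have hε0 : 0 < ε :=
    lt_min (Real.sqrt_pos.mpr (by linarith)) (lt_min (by linarith) (by linarith))
  have hεa : a ≤ m - ε := by
    have := le_trans (min_le_right (Real.sqrt (2 * d)) _) (min_le_left (m - a) (b - m))
    linarith
  have hεb : m + ε ≤ b := by
    have := le_trans (min_le_right (Real.sqrt (2 * d)) _) (min_le_right (m - a) (b - m))
    linarith
  have hfx : ∀ x ∈ Set.Icc (m - ε) (m + ε), c + d ≤ x * m - x ^ 2 / 2 := by
    intro x hx
    have h1 : (x - m) ^ 2 ≤ ε ^ 2 := sq_le_sq' (by linarith [hx.1]) (by linarith [hx.2])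
    have h2 : ε ^ 2 ≤ 2 * d := by
      have hεs : ε ≤ Real.sqrt (2 * d) := min_le_left _ _
      calc ε ^ 2 ≤ Real.sqrt (2 * d) ^ 2 := by
            exact pow_le_pow_left₀ hε0.le hεs 2
        _ = 2 * d := Real.sq_sqrt (by linarith)
    nlinarith
  have hcont : ∀ w : ℝ, Continuous fun x : ℝ => Real.exp (w * (x * m - x ^ 2 / 2)) := by
    intro w; fun_prop
  have hbound : ∀ᶠ w : ℝ in atTop,
      ‖(Real.exp (w * (a * m - a ^ 2 / 2)) - Real.exp (w * (b * m - b ^ 2 / 2))) /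
          ((∫ x in a..b, Real.exp (w * (x * m - x ^ 2 / 2))) * w)‖ ≤
        Real.exp (-(w * d)) * (ε * w)⁻¹ := by
    filter_upwards [eventually_ge_atTop (1 : ℝ)] with w hw
    have hw0 : (0 : ℝ) < w := lt_of_lt_of_le one_pos hw
    have hlow : 2 * ε * Real.exp (w * (c + d)) ≤
        ∫ x in a..b, Real.exp (w * (x * m - x ^ 2 / 2)) := by
      have h1 : (∫ _x in (m - ε)..(m + ε), Real.exp (w * (c + d))) ≤
          ∫ x in (m - ε)..(m + ε), Real.exp (w * (x * m - x ^ 2 / 2)) := by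
        apply intervalIntegral.integral_mono_on (by linarith) intervalIntegrable_const
          ((hcont w).intervalIntegrable _ _)
        intro x hx
        exact Real.exp_le_exp.mpr (mul_le_mul_of_nonneg_left (hfx x hx) hw0.le)
      have h2 : (∫ x in (m - ε)..(m + ε), Real.exp (w * (x * m - x ^ 2 / 2))) ≤
          ∫ x in a..b, Real.exp (w * (x * m - x ^ 2 / 2)) := by
        apply intervalIntegral.integral_mono_interval hεa (by linarith) hεb
          (Filter.Eventually.of_forall fun x => (Real.exp_pos _).le)
          ((hcont w).intervalIntegrable _ _)
      rw [intervalIntegral.integral_const, smul_eq_mul] at h1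
      have : (m + ε - (m - ε)) = 2 * ε := by ring
      rw [this] at h1
      linarith
    have hZpos : 0 < ∫ x in a..b, Real.exp (w * (x * m - x ^ 2 / 2)) :=
      lt_of_lt_of_le (by positivity) hlow
    have hnum : |Real.exp (w * (a * m - a ^ 2 / 2)) - Real.exp (w * (b * m - b ^ 2 / 2))| ≤
        2 * Real.exp (w * c) := by
      have h1 : Real.exp (w * (a * m - a ^ 2 / 2)) ≤ Real.exp (w * c) :=
        Real.exp_le_exp.mpr (mul_le_mul_of_nonneg_left hca hw0.le)
      have h2 : Real.exp (w * (b * m - b ^ 2 / 2)) ≤ Real.exp (w * c) :=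
        Real.exp_le_exp.mpr (mul_le_mul_of_nonneg_left hcb hw0.le)
      have h3 := abs_sub (Real.exp (w * (a * m - a ^ 2 / 2)))
        (Real.exp (w * (b * m - b ^ 2 / 2)))
      rw [abs_of_pos (Real.exp_pos _), abs_of_pos (Real.exp_pos _)] at h3
      linarith
    have hden : 0 < (∫ x in a..b, Real.exp (w * (x * m - x ^ 2 / 2))) * w :=
      mul_pos hZpos hw0
    rw [Real.norm_eq_abs, abs_div, abs_of_pos hden]
    have hkey : |Real.exp (w * (a * m - a ^ 2 / 2)) - Real.exp (w * (b * m - b ^ 2 / 2))| /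
        ((∫ x in a..b, Real.exp (w * (x * m - x ^ 2 / 2))) * w) ≤
        (2 * Real.exp (w * c)) / (2 * ε * Real.exp (w * (c + d)) * w) := by
      apply div_le_div₀ (by positivity) hnum (by positivity)
      exact mul_le_mul_of_nonneg_right hlow hw0.le
    refine hkey.trans (le_of_eq ?_)
    rw [show -(w * d) = w * c - w * (c + d) by ring, Real.exp_sub]
    field_simp
  have t1 : Tendsto (fun w : ℝ => Real.exp (-(w * d))) atTop (nhds 0) := by
    apply Real.tendsto_exp_atBot.comp
    exact Filter.tendsto_neg_atTop_atBot.comp (tendsto_id.atTop_mul_const hd0)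
  have t2 : Tendsto (fun w : ℝ => (ε * w)⁻¹) atTop (nhds 0) :=
    (Filter.Tendsto.const_mul_atTop hε0 tendsto_id).inv_tendsto_atTop
  exact squeeze_zero_norm' hbound (by simpa using t1.mul t2)
end
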